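/- Let ρ, σ be density matrices, U a unitary with √ρ·√σ·U = √(√ρ·σ·√ρ), and {E_m} a POVM. Then Σ_m √(tr(E_m ρ)·tr(E_m σ)) ≥ tr(√ρ·√σ·U) = tr√(√ρ·σ·√ρ), with equality if and only if for each m, either √ρ·√E_m = 0 or √σ·√E_m = κ_m·U·√ρ·√E_m for some nonnegative real κ_m. -/

import Mathlib

/-!
Put `Xₘ = U √ρ √Eₘ` and `Yₘ = √σ √Eₘ`. For the Hilbert–Schmidt inner product
`⟪A, B⟫ = tr (Aᴴ B)` one has `‖Xₘ‖² = tr (Eₘ ρ)` and `‖Yₘ‖² = tr (Eₘ σ)`, while `Σₘ Eₘ = 1` makes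
the real parts of `⟪Xₘ, Yₘ⟫` add up to `Re tr (√ρ √σ U)`. The bound is Cauchy–Schwarz term by
term, and equality holds iff every term is saturated: `Xₘ = 0` or `Yₘ` is a nonnegative multiple
of `Xₘ`.
-/

open scoped ComplexOrder

open Classical in
/-- The unique positive semidefinite square root of a positive semidefinite matrix
(junk value 0 otherwise). -/
noncomputable def psqrt {n : Type*} [Fintype n] [DecidableEq n] (X : Matrix n n ℂ) :
    Matrix n n ℂ :=
  if h : X.PosSemidef then
    (h.1.eigenvectorUnitary : Matrix n n ℂ) * Matrix.diagonal ((↑) ∘ (√·) ∘ h.1.eigenvalues) *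
      (star h.1.eigenvectorUnitary : Matrix n n ℂ) else 0

open scoped InnerProductSpace Matrix

section Psqrt
variable {n : Type*} [Fintype n] [DecidableEq n] {X : Matrix n n ℂ}

lemma psqrt_eq_cfc_sqrt (hX : X.PosSemidef) : psqrt X = cfc Real.sqrt X := by
  rw [psqrt, dif_pos hX, hX.1.cfc_eq, Matrix.IsHermitian.cfc, Unitary.conjStarAlgAut_apply]
  rfl

lemma psqrt_mul_self (hX : X.PosSemidef) : psqrt X * psqrt X = X := by
  rw [psqrt_eq_cfc_sqrt hX, ← cfc_mul Real.sqrt Real.sqrt X]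
  conv_rhs => rw [← cfc_id' ℝ X hX.1]
  refine cfc_congr fun x hx => Real.mul_self_sqrt ?_
  obtain ⟨i, rfl⟩ := hX.1.spectrum_real_eq_range_eigenvalues ▸ hx
  exact hX.eigenvalues_nonneg i

lemma conjTranspose_psqrt (hX : X.PosSemidef) : (psqrt X)ᴴ = psqrt X := by
  rw [psqrt_eq_cfc_sqrt hX]
  exact cfc_predicate Real.sqrt X

end Psqrt

section CauchySchwarz
variable {𝕜 E : Type*} [RCLike 𝕜] [NormedAddCommGroup E] [InnerProductSpace 𝕜 E]

lemma re_inner_eq_norm_mul_iff {x y : E} :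
    RCLike.re ⟪x, y⟫_𝕜 = ‖x‖ * ‖y‖ ↔ x = 0 ∨ ∃ κ : ℝ, 0 ≤ κ ∧ y = (κ : 𝕜) • x := by
  constructor
  · intro h
    have hle : ‖⟪x, y⟫_𝕜‖ ≤ RCLike.re ⟪x, y⟫_𝕜 := h ▸ norm_inner_le_norm x y
    have hinner : ⟪x, y⟫_𝕜 = (‖x‖ : 𝕜) * ‖y‖ :=
      (RCLike.re_eq_self_of_le hle).symm.trans (by rw [h, RCLike.ofReal_mul])
    refine or_iff_not_imp_left.2 fun hx => ⟨‖y‖ / ‖x‖, by positivity, ?_⟩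
    rw [RCLike.ofReal_div]
    exact ((inner_eq_norm_mul_iff_div hx).1 hinner).symm
  · rintro (rfl | ⟨κ, hκ, rfl⟩)
    · simp
    · rw [inner_smul_right, inner_self_eq_norm_sq_to_K, norm_smul, RCLike.norm_ofReal,
        abs_of_nonneg hκ]
      norm_cast
      ring

end CauchySchwarz

namespace Matrix
variable {m n 𝕜 : Type*}

noncomputable def frobeniusVec (A : Matrix m n 𝕜) : EuclideanSpace 𝕜 (m × n) :=
  WithLp.toLp 2 (Function.uncurry A)

lemma frobeniusVec_injective : Function.Injective (frobeniusVec : Matrix m n 𝕜 → _) :=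
  fun _ _ h => funext₂ fun i j => congrArg (· (i, j)) h

variable [RCLike 𝕜]

@[simp] lemma frobeniusVec_zero : frobeniusVec (0 : Matrix m n 𝕜) = 0 := rfl

@[simp] lemma frobeniusVec_smul (c : 𝕜) (A : Matrix m n 𝕜) :
    frobeniusVec (c • A) = c • frobeniusVec A := rfl

variable [Fintype m] [Fintype n]

lemma inner_frobeniusVec (A B : Matrix m n 𝕜) :
    ⟪frobeniusVec A, frobeniusVec B⟫_𝕜 = (Aᴴ * B).trace := by
  simp only [PiLp.inner_apply, RCLike.inner_apply, frobeniusVec, trace, diag, mul_apply,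
    conjTranspose_apply, Fintype.sum_prod_type]
  rw [Finset.sum_comm]
  exact Finset.sum_congr rfl fun _ _ => Finset.sum_congr rfl fun _ _ => mul_comm _ _

lemma norm_frobeniusVec_sq (A : Matrix m n 𝕜) :
    ‖frobeniusVec A‖ ^ 2 = RCLike.re (Aᴴ * A).trace := by
  rw [← inner_frobeniusVec, ← norm_sq_eq_re_inner]

lemma sqrt_re_trace_mul_re_trace_eq_norm_mul_norm (A B : Matrix m n 𝕜) :
    √(RCLike.re (Aᴴ * A).trace * RCLike.re (Bᴴ * B).trace) =
      ‖frobeniusVec A‖ * ‖frobeniusVec B‖ := by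
  rw [← norm_frobeniusVec_sq, ← norm_frobeniusVec_sq, ← mul_pow, Real.sqrt_sq (by positivity)]

lemma re_trace_conjTranspose_mul_le (A B : Matrix m n 𝕜) :
    RCLike.re (Aᴴ * B).trace ≤ √(RCLike.re (Aᴴ * A).trace * RCLike.re (Bᴴ * B).trace) := by
  rw [sqrt_re_trace_mul_re_trace_eq_norm_mul_norm, ← inner_frobeniusVec]
  exact re_inner_le_norm _ _

lemma re_trace_conjTranspose_mul_eq_iff {A B : Matrix m n 𝕜} :
    RCLike.re (Aᴴ * B).trace = √(RCLike.re (Aᴴ * A).trace * RCLike.re (Bᴴ * B).trace) ↔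
      A = 0 ∨ ∃ κ : ℝ, 0 ≤ κ ∧ B = (κ : 𝕜) • A := by
  rw [sqrt_re_trace_mul_re_trace_eq_norm_mul_norm, ← inner_frobeniusVec, re_inner_eq_norm_mul_iff,
    ← frobeniusVec_zero, frobeniusVec_injective.eq_iff]
  simp only [← frobeniusVec_smul, frobeniusVec_injective.eq_iff]

end Matrix

section Measurement
variable {n : Type*} [Fintype n] [DecidableEq n]

lemma trace_conjTranspose_mul_psqrt_mul_mul_psqrt {E : Matrix n n ℂ} (hE : E.PosSemidef)
    (M N : Matrix n n ℂ) : ((M * psqrt E)ᴴ * (N * psqrt E)).trace = (E * (Mᴴ * N)).trace := by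
  rw [Matrix.conjTranspose_mul, conjTranspose_psqrt hE, Matrix.mul_assoc, ← Matrix.mul_assoc Mᴴ,
    ← Matrix.mul_assoc, Matrix.trace_mul_cycle, psqrt_mul_self hE]

lemma conjTranspose_mul_self_unitary_mul_psqrt {A U : Matrix n n ℂ} (hA : A.PosSemidef)
    (hU : U ∈ Matrix.unitaryGroup n ℂ) : (U * psqrt A)ᴴ * (U * psqrt A) = A := by
  rw [Matrix.conjTranspose_mul, conjTranspose_psqrt hA, Matrix.mul_assoc, ← Matrix.mul_assoc Uᴴ,
    ← Matrix.star_eq_conjTranspose, Matrix.mem_unitaryGroup_iff'.mp hU, Matrix.one_mul,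
    psqrt_mul_self hA]

end Measurement

theorem povm_fidelity_bound_and_saturation_general
    {n ι : Type*} [Fintype n] [DecidableEq n] [Fintype ι]
    (rho sigma U : Matrix n n ℂ)
    (hrho : rho.PosSemidef) (hsigma : sigma.PosSemidef)
    (hU : U ∈ Matrix.unitaryGroup n ℂ)
    (hpolar : psqrt rho * psqrt sigma * U = psqrt (psqrt rho * sigma * psqrt rho))
    (E : ι → Matrix n n ℂ) (hE : ∀ m, (E m).PosSemidef) (hEsum : ∑ m, E m = 1) :
    Matrix.trace (psqrt rho * psqrt sigma * U)
        = Matrix.trace (psqrt (psqrt rho * sigma * psqrt rho)) ∧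
    (Matrix.trace (psqrt (psqrt rho * sigma * psqrt rho))).re
        ≤ ∑ m, Real.sqrt ((Matrix.trace (E m * rho)).re * (Matrix.trace (E m * sigma)).re) ∧
    ((∑ m, Real.sqrt ((Matrix.trace (E m * rho)).re * (Matrix.trace (E m * sigma)).re)
        = (Matrix.trace (psqrt (psqrt rho * sigma * psqrt rho))).re) ↔
      ∀ m, psqrt rho * psqrt (E m) = 0 ∨
        ∃ κ : ℝ, 0 ≤ κ ∧
          psqrt sigma * psqrt (E m) = (κ : ℂ) • (U * psqrt rho * psqrt (E m))) := by
  set X : ι → Matrix n n ℂ := fun m => U * psqrt rho * psqrt (E m)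
  set Y : ι → Matrix n n ℂ := fun m => psqrt sigma * psqrt (E m)
  have hXX (m : ι) : ((X m)ᴴ * X m).trace = (E m * rho).trace := by
    rw [trace_conjTranspose_mul_psqrt_mul_mul_psqrt (hE m),
      conjTranspose_mul_self_unitary_mul_psqrt hrho hU]
  have hYY (m : ι) : ((Y m)ᴴ * Y m).trace = (E m * sigma).trace := by
    rw [trace_conjTranspose_mul_psqrt_mul_mul_psqrt (hE m), conjTranspose_psqrt hsigma,
      psqrt_mul_self hsigma]
  have hXY :
      ∑ m, ((X m)ᴴ * Y m).trace.re = (psqrt (psqrt rho * sigma * psqrt rho)).trace.re := calc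
    _ = ((U * psqrt rho)ᴴ * psqrt sigma).trace.re := by
      simp only [X, Y, trace_conjTranspose_mul_psqrt_mul_mul_psqrt (hE _), ← Complex.re_sum,
        ← Matrix.trace_sum, ← Finset.sum_mul, hEsum, Matrix.one_mul]
    _ = (psqrt rho * psqrt sigma * U).trace.re := by
      rw [← Complex.conj_re, ← Complex.star_def, ← Matrix.trace_conjTranspose,
        Matrix.conjTranspose_mul, Matrix.conjTranspose_conjTranspose, conjTranspose_psqrt hsigma,
        ← Matrix.mul_assoc, Matrix.trace_mul_cycle]
    _ = _ := by rw [hpolar]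
  have hX0 (m : ι) : X m = 0 ↔ psqrt rho * psqrt (E m) = 0 := by
    rw [show X m = U * (psqrt rho * psqrt (E m)) from Matrix.mul_assoc _ _ _,
      (Unitary.isUnit_coe (U := ⟨U, hU⟩)).mul_right_eq_zero]
  have hCS (m : ι) :
      ((X m)ᴴ * Y m).trace.re ≤ √((E m * rho).trace.re * (E m * sigma).trace.re) :=
    hXX m ▸ hYY m ▸ Matrix.re_trace_conjTranspose_mul_le (X m) (Y m)
  refine ⟨congrArg Matrix.trace hpolar, hXY ▸ Finset.sum_le_sum fun m _ => hCS m, ?_⟩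
  rw [← hXY, eq_comm, Finset.sum_eq_sum_iff_of_le fun m _ => hCS m]
  simp only [Finset.mem_univ, forall_const]
  refine forall_congr' fun m => ?_
  rw [← hXX, ← hYY, ← hX0]
  exact Matrix.re_trace_conjTranspose_mul_eq_iff (A := X m) (B := Y m)

/-- Fuchs–Caves: the measured classical fidelity bound and its saturation condition.
For any POVM {E m}, Σ_m √(tr(E_m ρ) tr(E_m σ)) ≥ tr(√ρ √σ U) = tr √(√ρ σ √ρ), with
equality iff for each m either √ρ √(E m) = 0 or √σ √(E m) = κ_m U √ρ √(E m) with κ_m ≥ 0. -/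
theorem povm_fidelity_bound_and_saturation
    {n ι : Type*} [Fintype n] [DecidableEq n] [Fintype ι]
    (rho sigma U : Matrix n n ℂ)
    (hrho : rho.PosSemidef) (hsigma : sigma.PosSemidef)
    (htrr : rho.trace = 1) (htrs : sigma.trace = 1)
    (hU : U ∈ Matrix.unitaryGroup n ℂ)
    (hpolar : psqrt rho * psqrt sigma * U = psqrt (psqrt rho * sigma * psqrt rho))
    (E : ι → Matrix n n ℂ) (hE : ∀ m, (E m).PosSemidef) (hEsum : ∑ m, E m = 1) :
    Matrix.trace (psqrt rho * psqrt sigma * U)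
        = Matrix.trace (psqrt (psqrt rho * sigma * psqrt rho)) ∧
    (Matrix.trace (psqrt (psqrt rho * sigma * psqrt rho))).re
        ≤ ∑ m, Real.sqrt ((Matrix.trace (E m * rho)).re * (Matrix.trace (E m * sigma)).re) ∧
    ((∑ m, Real.sqrt ((Matrix.trace (E m * rho)).re * (Matrix.trace (E m * sigma)).re)
        = (Matrix.trace (psqrt (psqrt rho * sigma * psqrt rho))).re) ↔
      ∀ m, psqrt rho * psqrt (E m) = 0 ∨
        ∃ κ : ℝ, 0 ≤ κ ∧
          psqrt sigma * psqrt (E m) = (κ : ℂ) • (U * psqrt rho * psqrt (E m))) :=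
  povm_fidelity_bound_and_saturation_general rho sigma U hrho hsigma hU hpolar E hE hEsum
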